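/- In the CCR algebra setting, let R be a real symmetric n×n matrix, N a real m×n matrix, J a real antisymmetric m×m matrix, and Ω := I_m + iJ. Define H := (1/2)·XᵀRX, L := NX, and the GKSL generator acting entrywise on vectors of algebra elements by 𝒢(σ) := i[H, σ] − [σ, Lᵀ]ΩL − (1/2)[LᵀΩL, σ]. Then 𝒢(X) = A·X entrywise, where A := 2Θ(R + NᵀJN); moreover the dispersion matrix satisfies −i·[X, Lᵀ] = −i·[X, Xᵀ]Nᵀ = 2ΘNᵀ·1 entrywise. -/

import Mathlib

open Matrix

noncomputable section

namespace CCR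

variable {A : Type*} [Ring A] [Algebra ℂ A] {n : ℕ}

/-- The `n`-tuple `X` of elements of the algebra satisfies the canonical commutation
relations with CCR matrix `Θ`: `XⱼXₖ − XₖXⱼ = 2iΘⱼₖ·1`. -/
def SatisfiesCCR (X : Fin n → A) (Θ : Matrix (Fin n) (Fin n) ℝ) : Prop :=
  ∀ j k, X j * X k - X k * X j = ((2 * (Θ j k : ℂ)) * Complex.I) • (1 : A)

/-- The quadratic form `XᵀMX = Σ_{j,k} Mⱼₖ Xⱼ Xₖ`. -/
def quad (X : Fin n → A) (M : Matrix (Fin n) (Fin n) ℝ) : A :=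
  ∑ j, ∑ k, ((M j k : ℂ)) • (X j * X k)

/-- The `l`-th entry of the vector `TX`, namely `Σⱼ Tₗⱼ Xⱼ`. -/
def lin (X : Fin n → A) (T : Matrix (Fin n) (Fin n) ℝ) (l : Fin n) : A :=
  ∑ j, ((T l j : ℂ)) • X j

end CCR

open CCR

/-- The GKSL generator `𝒢(σ) = i[H,σ] − [σ,Lᵀ]ΩL − (1/2)[LᵀΩL, σ]` of an open quantum
system with Hamiltonian `H`, coupling vector `L` and Ito matrix `Ω`. -/
noncomputable def gksl {A : Type*} [Ring A] [Algebra ℂ A] {m : ℕ}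
    (H : A) (L : Fin m → A) (Ω : Matrix (Fin m) (Fin m) ℂ) (σ : A) : A :=
  Complex.I • (H * σ - σ * H)
    - ∑ j, ∑ k, Ω j k • ((σ * L j - L j * σ) * L k)
    - (1 / 2 : ℂ) • ((∑ j, ∑ k, Ω j k • (L j * L k)) * σ
        - σ * ∑ j, ∑ k, Ω j k • (L j * L k))

section Helpers
variable {A : Type*} [Ring A] [Algebra ℂ A] {n m : ℕ}


private theorem commXL (Θ : Matrix (Fin n) (Fin n) ℝ)
    (X : Fin n → A)
    (hX : ∀ j k, X j * X k - X k * X j = ((2 * (Θ j k : ℂ)) * Complex.I) • (1 : A))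
    (N : Matrix (Fin m) (Fin n) ℝ) (l : Fin n) (k : Fin m) :
    X l * (∑ j, ((N k j : ℂ)) • X j) - (∑ j, ((N k j : ℂ)) • X j) * X l =
      ((2 * (((Θ * Nᵀ) l k : ℝ) : ℂ)) * Complex.I) • (1 : A) := by
  rw [Finset.mul_sum, Finset.sum_mul, ← Finset.sum_sub_distrib]
  have : ∀ j ∈ Finset.univ, X l * ((N k j:ℂ) • X j) - ((N k j:ℂ) • X j) * X l
      = ((N k j : ℂ) * ((2 * (Θ l j : ℂ)) * Complex.I)) • (1:A) := by
    intro j _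
    rw [mul_smul_comm, smul_mul_assoc, ← smul_sub, hX, smul_smul]
  rw [Finset.sum_congr rfl this, ← Finset.sum_smul]
  congr 1
  rw [Matrix.mul_apply]
  push_cast
  rw [Finset.mul_sum, Finset.sum_mul]
  refine Finset.sum_congr rfl fun j _ => ?_
  simp only [Matrix.transpose_apply]
  ring

private theorem dissTerm (Θ : Matrix (Fin n) (Fin n) ℝ)
    (X : Fin n → A)
    (hX : ∀ j k, X j * X k - X k * X j = ((2 * (Θ j k : ℂ)) * Complex.I) • (1 : A))
    (N : Matrix (Fin m) (Fin n) ℝ)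
    (J : Matrix (Fin m) (Fin m) ℝ) (hJ : Jᵀ = -J) (l : Fin n) :
    (∑ j, ∑ k, ((1 : Matrix (Fin m) (Fin m) ℂ) + Complex.I • (J.map (algebraMap ℝ ℂ))) j k •
        ((X l * (∑ p, ((N j p : ℂ)) • X p) - (∑ p, ((N j p : ℂ)) • X p) * X l)
          * (∑ p, ((N k p : ℂ)) • X p)))
      + (1/2:ℂ) • ((∑ j, ∑ k, ((1 : Matrix (Fin m) (Fin m) ℂ) + Complex.I • (J.map (algebraMap ℝ ℂ))) j k •
            ((∑ p, ((N j p : ℂ)) • X p) * (∑ p, ((N k p : ℂ)) • X p))) * X l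
          - X l * ∑ j, ∑ k, ((1 : Matrix (Fin m) (Fin m) ℂ) + Complex.I • (J.map (algebraMap ℝ ℂ))) j k •
            ((∑ p, ((N j p : ℂ)) • X p) * (∑ p, ((N k p : ℂ)) • X p)))
    = ∑ p, ((-2 : ℂ) * (((Θ * Nᵀ * J * N) l p : ℝ) : ℂ)) • X p := by
  set Ω : Matrix (Fin m) (Fin m) ℂ :=
    (1 : Matrix (Fin m) (Fin m) ℂ) + Complex.I • (J.map (algebraMap ℝ ℂ)) with hΩdef
  set L : Fin m → A := fun k => ∑ p, ((N k p : ℂ)) • X p with hLdef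
  have hJanti : ∀ a b, J a b = -J b a := by
    intro a b; have := congrFun (congrFun hJ b) a
    simpa [Matrix.transpose_apply] using this
  have hΩdiff : ∀ j k, Ω j k - Ω k j = 2 * Complex.I * (J j k : ℂ) := by
    intro j k
    simp only [hΩdef, Matrix.add_apply, Matrix.one_apply, Matrix.smul_apply,
      Matrix.map_apply, smul_eq_mul, Algebra.algebraMap_self, algebraMap_apply]
    rw [hJanti k j]
    by_cases h : j = k
    · subst h; simp; ring
    · rw [if_neg h, if_neg (Ne.symm h)]
      simp only [Complex.coe_algebraMap]
      push_cast; ring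
  have hd : ∀ j, X l * L j - L j * X l
      = ((2 * (((Θ * Nᵀ) l j : ℝ) : ℂ)) * Complex.I) • (1:A) := fun j => commXL Θ X hX N l j
  have hd' : ∀ j, L j * X l - X l * L j
      = (-((2 * (((Θ * Nᵀ) l j : ℝ) : ℂ)) * Complex.I)) • (1:A) := by
    intro j; rw [← neg_sub, hd, neg_smul]
  -- term2
  have hterm2 : ∀ j k, Ω j k • ((X l * L j - L j * X l) * L k)
      = (Ω j k * ((2 * (((Θ * Nᵀ) l j : ℝ) : ℂ)) * Complex.I)) • L k := by
    intro j k
    rw [hd, smul_mul_assoc, one_mul, smul_smul]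
  -- term3 pointwise
  have hterm3 : ∀ j k, L j * L k * X l - X l * (L j * L k)
      = (-((2 * (((Θ * Nᵀ) l k : ℝ) : ℂ)) * Complex.I)) • L j
        + (-((2 * (((Θ * Nᵀ) l j : ℝ) : ℂ)) * Complex.I)) • L k := by
    intro j k
    have e1 : L j * L k * X l - X l * (L j * L k)
        = L j * (L k * X l - X l * L k) + (L j * X l - X l * L j) * L k := by noncomm_ring
    rw [e1, hd', hd', mul_smul_comm, smul_mul_assoc, mul_one, one_mul]
  have hsum3 : (∑ j, ∑ k, Ω j k • (L j * L k)) * X l - X l * ∑ j, ∑ k, Ω j k • (L j * L k)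
      = ∑ j, ∑ k, ((Ω j k * -((2 * (((Θ * Nᵀ) l k : ℝ) : ℂ)) * Complex.I)) • L j
          + (Ω j k * -((2 * (((Θ * Nᵀ) l j : ℝ) : ℂ)) * Complex.I)) • L k) := by
    rw [Finset.sum_mul, Finset.mul_sum, ← Finset.sum_sub_distrib]
    refine Finset.sum_congr rfl fun j _ => ?_
    rw [Finset.sum_mul, Finset.mul_sum, ← Finset.sum_sub_distrib]
    refine Finset.sum_congr rfl fun k _ => ?_
    rw [smul_mul_assoc, mul_smul_comm, ← smul_sub, hterm3, smul_add, smul_smul, smul_smul]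
  change ∑ j, ∑ k, Ω j k • ((X l * L j - L j * X l) * L k) + (1/2:ℂ) • ((∑ j, ∑ k, Ω j k • (L j * L k)) * X l - X l * ∑ j, ∑ k, Ω j k • (L j * L k)) = _
  simp only [hterm2]
  rw [hsum3]
  simp only [Finset.smul_sum, smul_add, Finset.sum_add_distrib, smul_smul]
  rw [Finset.sum_comm (f := fun j k =>
    ((1/2 : ℂ) * (Ω j k * -((2 * (((Θ * Nᵀ) l k : ℝ) : ℂ)) * Complex.I))) • L j)]
  simp only [← Finset.sum_add_distrib, ← add_smul]
  -- now Σ_j Σ_k c(j,k) • L k ; swap to Σ_k Σ_j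
  rw [Finset.sum_comm]
  -- Σ_k (Σ_j c) • L k
  simp only [← Finset.sum_smul]
  -- expand L k
  simp only [hLdef, Finset.smul_sum, smul_smul]
  rw [Finset.sum_comm]
  refine Finset.sum_congr rfl fun p _ => ?_
  rw [← Finset.sum_smul]
  congr 1
  rw [show Θ * Nᵀ * J * N = Θ * Nᵀ * J * N from rfl, Matrix.mul_apply]
  push_cast
  rw [Finset.mul_sum]
  refine Finset.sum_congr rfl fun k _ => ?_
  rw [Finset.sum_mul, Matrix.mul_apply]
  push_cast
  simp only [Finset.sum_mul, Finset.mul_sum]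
  refine Finset.sum_congr rfl fun j _ => ?_
  have h1 := hΩdiff j k
  have h2 := Complex.I_sq
  set t : ℂ := (((Θ * Nᵀ) l j : ℝ) : ℂ)
  set u : ℂ := ((N k p : ℝ) : ℂ)
  set v : ℂ := ((J j k : ℝ) : ℂ)
  linear_combination (t * Complex.I * u) * h1 + (2 * t * v * u) * h2

private theorem hamTerm (Θ : Matrix (Fin n) (Fin n) ℝ) (hΘ : Θᵀ = -Θ)
    (X : Fin n → A)
    (hX : ∀ j k, X j * X k - X k * X j = ((2 * (Θ j k : ℂ)) * Complex.I) • (1 : A))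
    (R : Matrix (Fin n) (Fin n) ℝ) (hR : Rᵀ = R) (l : Fin n) :
    Complex.I • (((1/2:ℂ) • ∑ j, ∑ k, ((R j k : ℂ)) • (X j * X k)) * X l
        - X l * ((1/2:ℂ) • ∑ j, ∑ k, ((R j k : ℂ)) • (X j * X k))) =
      ∑ p, ((2:ℂ) * (((Θ * R) l p : ℝ) : ℂ)) • X p := by
  have hantisym : ∀ a b, Θ a b = -Θ b a := by
    intro a b; have := congrFun (congrFun hΘ b) a
    simpa [Matrix.transpose_apply] using this
  have hsym : ∀ a b, R a b = R b a := by
    intro a b; have := congrFun (congrFun hR b) a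
    simpa [Matrix.transpose_apply] using this
  have step : ∀ j k : Fin n, X j * X k * X l - X l * (X j * X k) =
      ((2 * (Θ k l : ℂ)) * Complex.I) • X j + ((2 * (Θ j l : ℂ)) * Complex.I) • X k := by
    intro j k
    have e1 : X j * X k * X l - X l * (X j * X k)
        = X j * (X k * X l - X l * X k) + (X j * X l - X l * X j) * X k := by
      noncomm_ring
    rw [e1, hX, hX, mul_smul_comm, smul_mul_assoc, mul_one, one_mul]
  rw [smul_mul_assoc, mul_smul_comm, ← smul_sub, Finset.sum_mul, Finset.mul_sum,
    ← Finset.sum_sub_distrib]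
  have e2 : ∀ j ∈ Finset.univ,
      (∑ k, ((R j k : ℂ)) • (X j * X k)) * X l - X l * ∑ k, ((R j k : ℂ)) • (X j * X k)
        = ∑ k, ((((R j k : ℂ)) * ((2 * (Θ k l : ℂ)) * Complex.I)) • X j
            + (((R j k : ℂ)) * ((2 * (Θ j l : ℂ)) * Complex.I)) • X k) := by
    intro j _
    rw [Finset.sum_mul, Finset.mul_sum, ← Finset.sum_sub_distrib]
    refine Finset.sum_congr rfl fun k _ => ?_
    rw [smul_mul_assoc, mul_smul_comm, ← smul_sub, step, smul_add, smul_smul, smul_smul]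
  rw [Finset.sum_congr rfl e2]
  simp only [Finset.sum_add_distrib]
  rw [Finset.sum_comm (f := fun j k =>
    (((R j k : ℂ)) * ((2 * (Θ j l : ℂ)) * Complex.I)) • X k)]
  simp only [← Finset.sum_smul, ← Finset.sum_add_distrib, ← add_smul, smul_smul,
    Finset.smul_sum]
  refine Finset.sum_congr rfl fun p _ => ?_
  congr 1
  rw [Matrix.mul_apply]
  push_cast
  simp only [Finset.mul_sum]
  apply Finset.sum_congr rfl
  intro q _
  rw [hantisym q l, hsym p q]
  push_cast
  linear_combination (-2*((R q p:ℝ):ℂ)*((Θ l q:ℝ):ℂ)) * Complex.I_sq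

end Helpers

/-- For the open quantum harmonic oscillator with `H = (1/2)XᵀRX`, `L = NX` and
`Ω = I + iJ`, the GKSL generator acts on the system variables as `𝒢(X) = AX` with
`A = 2Θ(R + NᵀJN)`, and the dispersion matrix is `−i[X, Lᵀ] = −i[X, Xᵀ]Nᵀ = 2ΘNᵀ·1`. -/
theorem ccr_gksl_linear_drift
    {A : Type*} [Ring A] [Algebra ℂ A] {n m : ℕ}
    (Θ : Matrix (Fin n) (Fin n) ℝ) (hΘ : Θᵀ = -Θ)
    (X : Fin n → A) (hX : SatisfiesCCR X Θ)
    (R : Matrix (Fin n) (Fin n) ℝ) (hR : Rᵀ = R)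
    (N : Matrix (Fin m) (Fin n) ℝ)
    (J : Matrix (Fin m) (Fin m) ℝ) (hJ : Jᵀ = -J) :
    (∀ l, gksl ((1 / 2 : ℂ) • quad X R) (fun k => ∑ j, ((N k j : ℂ)) • X j)
          ((1 : Matrix (Fin m) (Fin m) ℂ) + Complex.I • (J.map (algebraMap ℝ ℂ)))
          (X l) =
        ∑ j, ((((2 : ℝ) • (Θ * (R + Nᵀ * J * N))) l j : ℂ)) • X j) ∧
      (∀ l k, (-Complex.I) •
            (X l * (∑ j, ((N k j : ℂ)) • X j) - (∑ j, ((N k j : ℂ)) • X j) * X l) =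
          (-Complex.I) • ∑ j, ((N k j : ℂ)) • (X l * X j - X j * X l)) ∧
      ∀ l k, (-Complex.I) •
          (X l * (∑ j, ((N k j : ℂ)) • X j) - (∑ j, ((N k j : ℂ)) • X j) * X l) =
        ((((2 : ℝ) • (Θ * Nᵀ)) l k : ℂ)) • (1 : A) := by
  constructor
  · intro l
    unfold gksl quad
    rw [sub_sub]
    rw [hamTerm Θ hΘ X hX R hR l]
    rw [dissTerm Θ X hX N J hJ l]
    rw [← Finset.sum_sub_distrib]
    refine Finset.sum_congr rfl fun p _ => ?_
    rw [← sub_smul]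
    congr 1
    simp only [Matrix.smul_apply, Matrix.mul_add, Matrix.add_apply, smul_eq_mul,
      ← Matrix.mul_assoc]
    push_cast
    ring
  constructor
  · intro l k
    congr 1
    rw [Finset.mul_sum, Finset.sum_mul, ← Finset.sum_sub_distrib]
    refine Finset.sum_congr rfl fun j _ => ?_
    rw [mul_smul_comm, smul_mul_assoc, ← smul_sub]
  · intro l k
    rw [commXL Θ X hX N l k, smul_smul]
    congr 1
    simp only [Matrix.smul_apply, smul_eq_mul]
    push_cast
    linear_combination (-2*(((Θ * Nᵀ) l k : ℝ) : ℂ)) * Complex.I_sq
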